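/- arXiv:1904.01820 — 2 statements merged into one kernel-verified Lean document; each statement's English description precedes it below -/
import Mathlib

section
/- Let σ be the semicircle law and for x > 2 set G_σ(x) := (x − √(x²−4))/2. Fix θ > 0 and x > 2, define v := 2θ if 2θ ≤ G_σ(x) and v := x − 1/(2θ) otherwise, and define 𝒥 := θ·v − (1/2)·∫ log(1 + 2θv − 2θy) dσ(y). Then: (i) if θ ≤ G_σ(x)/2, 𝒥 = θ²; (ii) if θ > G_σ(x)/2, 𝒥 = θx − 1/2 + (1/2)·log(1/(2θ)) − (1/2)·∫ log|x−y| dσ(y). -/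
/-!
In case (ii), `1 + 2θv - 2θy = 2θ(x - y)` and the claim is algebra. In case (i), put
`c = 2θ < 1` and `F(c) = ∫ log (1 + c² - cy) dσ(y)`. Since `1 + s² - sy = s(z - y)` with
`z = s + 1/s > 2`, the derivative `F'(s)` is an affine expression in the Stieltjes transform
`∫ dσ(y)/(z - y)`, which equals `G_σ(z)` (an explicit arcsin primitive gives it). As
`G_σ(s + 1/s) = s`, this yields `F'(s) = s`, hence `F(c) = c²/2`.
-/

open MeasureTheory

noncomputable section

/-- The semicircle law: density `√(4-t²)/(2π)` on `[-2,2]`. -/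
def semicircle : Measure ℝ :=
  volume.withDensity fun t => ENNReal.ofReal (Real.sqrt (4 - t ^ 2) / (2 * Real.pi))

/-- `G_σ(x) = (x - √(x²-4))/2` for `x > 2`. -/
def Gsc (x : ℝ) : ℝ := (x - Real.sqrt (x ^ 2 - 4)) / 2

/-- `v(θ,σ,x) = R_σ(2θ) = 2θ` if `2θ ≤ G_σ(x)`, and `x - 1/(2θ)` otherwise. -/
def vsc (θ x : ℝ) : ℝ := if 2 * θ ≤ Gsc x then 2 * θ else x - 1 / (2 * θ)

/-- The limit of normalized spherical integrals at the semicircle law: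
`𝒥 = θ v - (1/2) ∫ log(1 + 2θv - 2θy) dσ(y)`. -/
def Jsc (θ x : ℝ) : ℝ :=
  θ * vsc θ x - (1 / 2) * ∫ y, Real.log (1 + 2 * θ * vsc θ x - 2 * θ * y) ∂semicircle

open Real Set

def semicircleDensity (t : ℝ) : ℝ := √(4 - t ^ 2) / (2 * π)

lemma semicircleDensity_nonneg (t : ℝ) : 0 ≤ semicircleDensity t := by
  unfold semicircleDensity; positivity

@[fun_prop]
lemma continuous_semicircleDensity : Continuous semicircleDensity := by
  unfold semicircleDensity; fun_prop

lemma semicircleDensity_eq_zero {t : ℝ} (ht : t ∉ Icc (-2 : ℝ) 2) :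
    semicircleDensity t = 0 := by
  have : 4 - t ^ 2 ≤ 0 := by
    rw [mem_Icc, not_and_or, not_le, not_le] at ht
    rcases ht with h | h <;> nlinarith
  rw [semicircleDensity, sqrt_eq_zero_of_nonpos this, zero_div]

lemma integral_semicircle (f : ℝ → ℝ) :
    ∫ y, f y ∂semicircle = ∫ t in (-2 : ℝ)..2, f t * semicircleDensity t := by
  have hmeas : Measurable fun t => ENNReal.ofReal (semicircleDensity t) :=
    ENNReal.measurable_ofReal.comp continuous_semicircleDensity.measurable
  rw [show semicircle = volume.withDensity fun t => ENNReal.ofReal (semicircleDensity t) from rfl,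
    integral_withDensity_eq_integral_toReal_smul hmeas
      (Filter.Eventually.of_forall fun _ => ENNReal.ofReal_lt_top),
    intervalIntegral.integral_of_le (by norm_num), ← integral_Icc_eq_integral_Ioc,
    setIntegral_eq_integral_of_forall_compl_eq_zero
      fun t ht => by rw [semicircleDensity_eq_zero ht, mul_zero]]
  simp only [ENNReal.toReal_ofReal (semicircleDensity_nonneg _), smul_eq_mul, mul_comm]

lemma integral_sqrt_four_sub_sq : ∫ t in (-2 : ℝ)..2, √(4 - t ^ 2) = 2 * π := by
  have hscale : ∀ u : ℝ, √(4 - (2 * u) ^ 2) = 2 * √(1 - u ^ 2) := fun u => by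
    rw [show (4 : ℝ) - (2 * u) ^ 2 = 2 ^ 2 * (1 - u ^ 2) by ring, sqrt_mul (by norm_num),
      sqrt_sq (by norm_num)]
  have h := intervalIntegral.integral_comp_mul_left (fun t => √(4 - t ^ 2)) (a := -1) (b := 1)
    (two_ne_zero' ℝ)
  simp only [hscale, intervalIntegral.integral_const_mul, integral_sqrt_one_sub_sq,
    smul_eq_mul] at h
  norm_num at h
  linarith

lemma integral_semicircleDensity : ∫ t in (-2 : ℝ)..2, semicircleDensity t = 1 := by
  simp only [semicircleDensity]
  rw [intervalIntegral.integral_div, integral_sqrt_four_sub_sq]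
  field_simp

lemma hasDerivAt_stieltjes_primitive {z t : ℝ} (hz : 2 < z) (ht : t ∈ Ioo (-2 : ℝ) 2) :
    HasDerivAt (fun t => z * arcsin (t / 2) - √(4 - t ^ 2)
        - √(z ^ 2 - 4) * arcsin ((z * t - 4) / (2 * (z - t))))
      (√(4 - t ^ 2) / (z - t)) t := by
  obtain ⟨ht₁, ht₂⟩ := ht
  have h4t : 0 < 4 - t ^ 2 := by nlinarith
  have hzt : 0 < z - t := by linarith
  set a := √(4 - t ^ 2) with ha
  set b := √(z ^ 2 - 4)
  have ha0 : 0 < a := sqrt_pos.mpr h4t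
  have hb0 : 0 < b := sqrt_pos.mpr (by nlinarith)
  have ha2 : a ^ 2 = 4 - t ^ 2 := sq_sqrt h4t.le
  have hb2 : b ^ 2 = z ^ 2 - 4 := sq_sqrt (by nlinarith)
  set u := (z * t - 4) / (2 * (z - t)) with hu
  have hcos_u : 1 - u ^ 2 = (a * b / (2 * (z - t))) ^ 2 := by
    rw [hu]; field_simp; rw [ha2, hb2]; ring
  have hcos_t : 1 - (t / 2) ^ 2 = (a / 2) ^ 2 := by rw [div_pow, div_pow, ha2]; ring
  have hu1 : u ^ 2 < 1 := by nlinarith [hcos_u, show 0 < a * b / (2 * (z - t)) by positivity]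
  have harcsin_t := (hasDerivAt_arcsin (x := t / 2) (by nlinarith) (by nlinarith)).comp t
    ((hasDerivAt_id t).div_const 2)
  have harcsin_u := (hasDerivAt_arcsin (x := u) (by nlinarith) (by nlinarith)).comp t
    ((((hasDerivAt_id t).const_mul z).sub_const 4).div
      (((hasDerivAt_id t).const_sub z).const_mul 2) (by positivity))
  have hsqrt := ((hasDerivAt_pow 2 t).const_sub 4).sqrt h4t.ne'
  refine (((harcsin_t.const_mul z).sub hsqrt).sub (harcsin_u.const_mul b)).congr_deriv ?_
  rw [hcos_t, hcos_u, sqrt_sq (by positivity), sqrt_sq (by positivity)]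
  simp only [id, ← ha]
  norm_num
  field_simp
  linear_combination -ha2

lemma integral_sqrt_four_sub_sq_div_sub {z : ℝ} (hz : 2 < z) :
    ∫ t in (-2 : ℝ)..2, √(4 - t ^ 2) / (z - t) = π * (z - √(z ^ 2 - 4)) := by
  have hne : ∀ t ∈ Icc (-2 : ℝ) 2, z - t ≠ 0 := fun t ht => by linarith [ht.2]
  have hcont : ContinuousOn (fun t => z * arcsin (t / 2) - √(4 - t ^ 2)
      - √(z ^ 2 - 4) * arcsin ((z * t - 4) / (2 * (z - t)))) (Icc (-2) 2) := by
    have : ∀ t ∈ Icc (-2 : ℝ) 2, 2 * (z - t) ≠ 0 := fun t ht =>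
      mul_ne_zero two_ne_zero (hne t ht)
    fun_prop (disch := assumption)
  have hint : IntervalIntegrable (fun t => √(4 - t ^ 2) / (z - t)) volume (-2) 2 := by
    apply ContinuousOn.intervalIntegrable
    rw [uIcc_of_le (by norm_num)]
    fun_prop (disch := assumption)
  rw [intervalIntegral.integral_eq_sub_of_hasDerivAt_of_le (by norm_num) hcont
    (fun t ht => hasDerivAt_stieltjes_primitive hz ht) hint]
  have hright : (z * 2 - 4) / (2 * (z - 2)) = 1 := by
    rw [div_eq_one_iff_eq (by linarith)]; ring
  have hleft : (z * -2 - 4) / (2 * (z - -2)) = -1 := by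
    rw [div_eq_iff (by linarith)]; ring
  rw [hright, hleft]
  norm_num
  ring

lemma integral_semicircleDensity_div_sub {z : ℝ} (hz : 2 < z) :
    ∫ t in (-2 : ℝ)..2, semicircleDensity t / (z - t) = Gsc z := by
  simp only [semicircleDensity, div_right_comm _ (2 * π)]
  rw [intervalIntegral.integral_div, integral_sqrt_four_sub_sq_div_sub hz, Gsc]
  field_simp

lemma sq_one_sub_abs_le {x t : ℝ} (ht : |t| ≤ 2) : (1 - |x|) ^ 2 ≤ 1 + x ^ 2 - x * t := by
  have : x * t ≤ |x| * 2 := (le_abs_self _).trans (by rw [abs_mul]; gcongr)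
  nlinarith [sq_abs x]

lemma hasDerivAt_log_one_add_sq_sub_mul {x t : ℝ} (h : 0 < 1 + x ^ 2 - x * t) :
    HasDerivAt (fun x => log (1 + x ^ 2 - x * t)) ((2 * x - t) / (1 + x ^ 2 - x * t)) x := by
  have hpoly : HasDerivAt (fun x => 1 + x ^ 2 - x * t) (2 * x - t) x := by
    refine (((hasDerivAt_pow 2 x).const_add 1).sub ((hasDerivAt_id' x).mul_const t)).congr_deriv ?_
    norm_num
  exact hpoly.log h.ne'

lemma hasDerivAt_integral_log_one_add_sq_sub_mul {s : ℝ} (hs : |s| < 1) :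
    HasDerivAt (fun x => ∫ t in (-2 : ℝ)..2, log (1 + x ^ 2 - x * t) * semicircleDensity t)
      (∫ t in (-2 : ℝ)..2, (2 * s - t) / (1 + s ^ 2 - s * t) * semicircleDensity t) s := by
  obtain ⟨r, hsr, hr⟩ := exists_between hs
  have hdenom : ∀ x ∈ Ioo (-r) r, ∀ t ∈ uIoc (-2 : ℝ) 2,
      (1 - r) ^ 2 ≤ 1 + x ^ 2 - x * t := by
    intro x hx t ht
    rw [uIoc_of_le (by norm_num)] at ht
    have hxr : |x| ≤ r := (abs_lt.mpr hx).le
    calc (1 - r) ^ 2 ≤ (1 - |x|) ^ 2 := by gcongr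
      _ ≤ _ := sq_one_sub_abs_le (abs_le.mpr ⟨ht.1.le, ht.2⟩)
  have hpos : 0 < (1 - r) ^ 2 := by nlinarith
  have hs_mem : s ∈ Ioo (-r) r := abs_lt.mp hsr
  refine (intervalIntegral.hasDerivAt_integral_of_dominated_loc_of_deriv_le
    (F := fun x t => log (1 + x ^ 2 - x * t) * semicircleDensity t)
    (F' := fun x t => (2 * x - t) / (1 + x ^ 2 - x * t) * semicircleDensity t)
    (bound := fun t => 4 / (1 - r) ^ 2 * semicircleDensity t) (Ioo_mem_nhds hs_mem.1 hs_mem.2)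
    (Filter.Eventually.of_forall fun x => (by fun_prop : Measurable _).aestronglyMeasurable)
    ?_ (by fun_prop : Measurable _).aestronglyMeasurable ?_
    ((continuous_semicircleDensity.const_mul _).intervalIntegrable _ _) ?_).2
  · apply ContinuousOn.intervalIntegrable
    refine ContinuousOn.mul (ContinuousOn.log (by fun_prop) fun t ht => ?_) (by fun_prop)
    rw [uIcc_of_le (by norm_num)] at ht
    have := sq_one_sub_abs_le (x := s) (abs_le.mpr ⟨ht.1, ht.2⟩)
    nlinarith
  · refine Filter.Eventually.of_forall fun t ht x hx => ?_
    have hD := hdenom x hx t ht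
    rw [uIoc_of_le (by norm_num)] at ht
    have hnum : |2 * x - t| ≤ 4 := by
      rw [abs_le]; constructor <;> linarith [hx.1, hx.2, ht.1, ht.2]
    rw [norm_mul, norm_div, Real.norm_of_nonneg (semicircleDensity_nonneg t),
      Real.norm_of_nonneg (hpos.trans_le hD).le, Real.norm_eq_abs]
    gcongr
    exact semicircleDensity_nonneg t
  · exact Filter.Eventually.of_forall fun t ht x hx =>
      (hasDerivAt_log_one_add_sq_sub_mul (hpos.trans_le (hdenom x hx t ht))).mul_const _

lemma Gsc_add_inv {s : ℝ} (hs0 : 0 < s) (hs1 : s ≤ 1) : Gsc (s + s⁻¹) = s := by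
  have h : (s + s⁻¹) ^ 2 - 4 = (s⁻¹ - s) ^ 2 := by field_simp; ring
  have hle : s ≤ s⁻¹ := by rw [le_inv_comm₀ hs0 hs0]; nlinarith
  rw [Gsc, h, sqrt_sq (by linarith)]
  ring

lemma integral_semicircleDensity_div_one_add_sq_sub_mul {s : ℝ} (hs0 : 0 < s) (hs1 : s < 1) :
    ∫ t in (-2 : ℝ)..2, (2 * s - t) / (1 + s ^ 2 - s * t) * semicircleDensity t = s := by
  have hz2 : 2 < s + s⁻¹ := by
    have h1s : 0 < 1 - s := by linarith
    have : s + s⁻¹ - 2 = (1 - s) ^ 2 / s := by field_simp; ring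
    have : 0 < (1 - s) ^ 2 / s := by positivity
    linarith
  have hne : ∀ t ∈ Icc (-2 : ℝ) 2, s + s⁻¹ - t ≠ 0 := fun t ht => by linarith [ht.2]
  have hsplit : ∀ t ∈ uIcc (-2 : ℝ) 2, (2 * s - t) / (1 + s ^ 2 - s * t) * semicircleDensity t
      = s⁻¹ * semicircleDensity t
        + (1 - s⁻¹ ^ 2) * (semicircleDensity t / (s + s⁻¹ - t)) := by
    intro t ht
    rw [uIcc_of_le (by norm_num)] at ht
    have hD : 1 + s ^ 2 - s * t ≠ 0 := by nlinarith [ht.1, ht.2]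
    have : s + s⁻¹ - t = (1 + s ^ 2 - s * t) / s := by field_simp; ring
    rw [this]
    field_simp
    ring
  have hint : IntervalIntegrable (fun t => semicircleDensity t / (s + s⁻¹ - t))
      volume (-2) 2 := by
    apply ContinuousOn.intervalIntegrable
    rw [uIcc_of_le (by norm_num)]
    fun_prop (disch := assumption)
  rw [intervalIntegral.integral_congr hsplit, intervalIntegral.integral_add
      ((continuous_semicircleDensity.const_mul _).intervalIntegrable _ _) (hint.const_mul _),
    intervalIntegral.integral_const_mul, intervalIntegral.integral_const_mul,
    integral_semicircleDensity, integral_semicircleDensity_div_sub hz2, Gsc_add_inv hs0 hs1.le]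
  field_simp
  ring

lemma integral_semicircle_log_one_add_sq_sub_mul {c : ℝ} (hc0 : 0 ≤ c) (hc1 : c < 1) :
    ∫ y, log (1 + c ^ 2 - c * y) ∂semicircle = c ^ 2 / 2 := by
  set F := fun x => ∫ t in (-2 : ℝ)..2, log (1 + x ^ 2 - x * t) * semicircleDensity t
  have hderiv : ∀ s ∈ Icc 0 c, HasDerivAt F
      (∫ t in (-2 : ℝ)..2, (2 * s - t) / (1 + s ^ 2 - s * t) * semicircleDensity t) s :=
    fun s hs => hasDerivAt_integral_log_one_add_sq_sub_mul
      (abs_lt.mpr ⟨by linarith [hs.1], by linarith [hs.2]⟩)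
  have hFTC := intervalIntegral.integral_eq_sub_of_hasDerivAt_of_le (f' := fun s => s) hc0
    (fun s hs => (hderiv s hs).continuousAt.continuousWithinAt)
    (fun s hs => (hderiv s (Ioo_subset_Icc_self hs)).congr_deriv
      (integral_semicircleDensity_div_one_add_sq_sub_mul hs.1 (hs.2.trans hc1)))
    (continuous_id'.intervalIntegrable 0 c)
  have hF0 : F 0 = 0 := by simp [F]
  rw [integral_id, hF0] at hFTC
  rw [integral_semicircle]
  linarith

lemma integral_semicircle_log_mul_sub {a x : ℝ} (ha : 0 < a) (hx : 2 < x) :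
    ∫ y, log (a * (x - y)) ∂semicircle = log a + ∫ y, log |x - y| ∂semicircle := by
  have hsplit : ∀ t ∈ uIcc (-2 : ℝ) 2, log (a * (x - t)) * semicircleDensity t
      = log a * semicircleDensity t + log |x - t| * semicircleDensity t := by
    intro t ht
    rw [uIcc_of_le (by norm_num)] at ht
    have hxt : 0 < x - t := by linarith [ht.2]
    rw [log_mul ha.ne' hxt.ne', abs_of_pos hxt, add_mul]
  have hint : IntervalIntegrable (fun t => log |x - t| * semicircleDensity t)
      volume (-2) 2 := by
    apply ContinuousOn.intervalIntegrable
    refine ContinuousOn.mul (ContinuousOn.log (by fun_prop) fun t ht => ?_) (by fun_prop)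
    rw [uIcc_of_le (by norm_num)] at ht
    exact abs_ne_zero.mpr (by linarith [ht.2])
  rw [integral_semicircle, integral_semicircle, intervalIntegral.integral_congr hsplit,
    intervalIntegral.integral_add
      ((continuous_semicircleDensity.const_mul _).intervalIntegrable _ _) hint,
    intervalIntegral.integral_const_mul, integral_semicircleDensity, mul_one]

lemma Gsc_lt_one {x : ℝ} (hx : 2 < x) : Gsc x < 1 := by
  have : x - 2 < √(x ^ 2 - 4) := (lt_sqrt (by linarith)).mpr (by nlinarith)
  rw [Gsc]
  linarith

/-- Explicit evaluation of the limiting spherical integral `J(σ,θ,x)` at the semicircle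
law: it equals `θ²` when `θ ≤ G_σ(x)/2`, and
`θx - 1/2 + (1/2)log(1/(2θ)) - (1/2)∫log|x-y|dσ(y)` when `θ > G_σ(x)/2`. -/
theorem spherical_integral_semicircle_eval (θ x : ℝ) (hθ : 0 < θ) (hx : 2 < x) :
    (θ ≤ Gsc x / 2 → Jsc θ x = θ ^ 2) ∧
    (Gsc x / 2 < θ →
      Jsc θ x = θ * x - 1 / 2 + (1 / 2) * Real.log (1 / (2 * θ))
        - (1 / 2) * ∫ y, Real.log |x - y| ∂semicircle) := by
  constructor
  · intro hθG
    have hv : vsc θ x = 2 * θ := if_pos (by linarith)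
    have hc1 : 2 * θ < 1 := by linarith [Gsc_lt_one hx]
    rw [Jsc, hv]
    simp_rw [← sq]
    rw [integral_semicircle_log_one_add_sq_sub_mul (by positivity) hc1]
    ring
  · intro hθG
    have hv : vsc θ x = x - 1 / (2 * θ) := if_neg (by linarith)
    have harg : ∀ y, 1 + 2 * θ * (x - 1 / (2 * θ)) - 2 * θ * y = 2 * θ * (x - y) := by
      intro y; field_simp; ring
    rw [Jsc, hv]
    simp_rw [harg]
    rw [integral_semicircle_log_mul_sub (by positivity) hx, one_div, log_inv]
    field_simp
    ring

end
end

section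
/- Let a ≥ 1 and 2 ≤ x ≤ a + 1/a. Then F_a is non-decreasing on [2, x], so the supremum of F_a over [2, x] is attained at y = x: for every y ∈ [2, x], F_a(y) ≤ F_a(x). -/
open MeasureTheory

noncomputable section

/-- The limit `J(σ,θ,y)` of normalized spherical integrals at the semicircle law. -/
def Jfun (θ y : ℝ) : ℝ :=
  if 2 * θ ≤ (y - Real.sqrt (y ^ 2 - 4)) / 2 then θ ^ 2
  else θ * y - 1 / 2 - (1 / 2) * Real.log (2 * θ) - (1 / 2) * ∫ t, Real.log |y - t| ∂semicircle

/-- `F_a(y) = J(σ, a/2, y) - y²/4 + ∫ log|y-t| dσ(t)`. -/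
def Ffun (a y : ℝ) : ℝ :=
  Jfun (a / 2) y - y ^ 2 / 4 + ∫ t, Real.log |y - t| ∂semicircle

/-! For `a > 1` the first branch of `J(a/2, y)` never applies when `y ≥ 2`, because
`(y - √(y² - 4))/2 ≤ 1 < a`; hence `F_a(y) = a y/2 - y²/4 + G(y)/2 + const` with
`G(y) = ∫ log|y - t| dσ(t)`. Concavity of `log` gives `G(y₂) - G(y₁) ≥ (y₂ - y₁) m(y₂)`, where
`m(y) = ∫ (y - t)⁻¹ dσ(t) = (y - √(y² - 4))/2` is the Stieltjes transform of `σ`, computed from an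
explicit arcsine primitive. Therefore
`F_a(y₂) - F_a(y₁) ≥ (y₂ - y₁)(2a - y₁ - √(y₂² - 4))/4 ≥ 0`, since `y₁ ≤ a + 1/a` and
`√(y₂² - 4) ≤ a - 1/a`. For `a = 1` the interval `[2, x]` is a single point. -/

open Real Set

lemma sqrt_four_sub_sq_eq_zero_of_notMem_Ioo {t : ℝ} (ht : t ∉ Ioo (-2) 2) : √(4 - t ^ 2) = 0 := by
  rw [mem_Ioo, not_and_or, not_lt, not_lt] at ht
  exact sqrt_eq_zero'.mpr (by rcases ht with h | h <;> nlinarith)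

lemma hasDerivAt_arcsin_half {t : ℝ} (ht : t ∈ Ioo (-2 : ℝ) 2) :
    HasDerivAt (fun t => arcsin (t / 2)) (1 / √(4 - t ^ 2)) t := by
  have hsqrt : √(1 - (t / 2) ^ 2) = √(4 - t ^ 2) / 2 := by
    rw [show 1 - (t / 2) ^ 2 = (4 - t ^ 2) / 2 ^ 2 by ring, sqrt_div' _ (by norm_num),
      sqrt_sq (by norm_num)]
  refine ((hasDerivAt_arcsin (by linarith [ht.1]) (by linarith [ht.2])).comp t
    ((hasDerivAt_id' t).div_const 2)).congr_deriv ?_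
  rw [hsqrt]
  field_simp

lemma hasDerivAt_sqrt_four_sub_sq {t : ℝ} (ht : t ∈ Ioo (-2 : ℝ) 2) :
    HasDerivAt (fun t => √(4 - t ^ 2)) (-t / √(4 - t ^ 2)) t := by
  have h4 : 0 < 4 - t ^ 2 := by nlinarith [ht.1, ht.2]
  refine (((hasDerivAt_pow 2 t).const_sub 4).sqrt h4.ne').congr_deriv ?_
  field_simp
  ring

lemma hasDerivAt_arcsin_moebius {y t : ℝ} (hy : 2 < y) (ht : t ∈ Ioo (-2 : ℝ) 2) :
    HasDerivAt (fun t => arcsin ((y * t - 4) / (2 * (y - t))))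
      (√(y ^ 2 - 4) / ((y - t) * √(4 - t ^ 2))) t := by
  have hyt : 0 < y - t := by linarith [ht.2]
  have hq : 0 < √(4 - t ^ 2) := sqrt_pos.mpr (by nlinarith [ht.1, ht.2])
  have hs : 0 < √(y ^ 2 - 4) := sqrt_pos.mpr (by nlinarith)
  have hq2 := sq_sqrt (show 0 ≤ 4 - t ^ 2 by nlinarith [ht.1, ht.2])
  have hs2 := sq_sqrt (show 0 ≤ y ^ 2 - 4 by nlinarith)
  set u := (y * t - 4) / (2 * (y - t))
  have hu : 1 - u ^ 2 = (√(y ^ 2 - 4) * √(4 - t ^ 2) / (2 * (y - t))) ^ 2 := by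
    simp only [u]
    field_simp
    linear_combination (-(√(4 - t ^ 2) ^ 2)) * hs2 - (y ^ 2 - 4) * hq2
  have hu_pos : 0 < 1 - u ^ 2 := hu ▸ by positivity
  have hdu : HasDerivAt (fun t => (y * t - 4) / (2 * (y - t)))
      ((y ^ 2 - 4) / (2 * (y - t) ^ 2)) t := by
    refine ((((hasDerivAt_id' t).const_mul y).sub_const 4).div
      (((hasDerivAt_id' t).const_sub y).const_mul 2) (by positivity)).congr_deriv ?_
    field_simp
    ring
  refine ((hasDerivAt_arcsin (by nlinarith) (by nlinarith)).comp t hdu).congr_deriv ?_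
  rw [hu, sqrt_sq (by positivity)]
  field_simp
  linear_combination (-1 : ℝ) * hs2

def stieltjesPrimitive (y t : ℝ) : ℝ :=
  y * arcsin (t / 2) - √(4 - t ^ 2) - √(y ^ 2 - 4) * arcsin ((y * t - 4) / (2 * (y - t)))

lemma hasDerivAt_stieltjesPrimitive {y t : ℝ} (hy : 2 < y) (ht : t ∈ Ioo (-2 : ℝ) 2) :
    HasDerivAt (stieltjesPrimitive y) (√(4 - t ^ 2) / (y - t)) t := by
  have hyt : 0 < y - t := by linarith [ht.2]
  have hq : 0 < √(4 - t ^ 2) := sqrt_pos.mpr (by nlinarith [ht.1, ht.2])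
  have hq2 := sq_sqrt (show 0 ≤ 4 - t ^ 2 by nlinarith [ht.1, ht.2])
  have hs2 := sq_sqrt (show 0 ≤ y ^ 2 - 4 by nlinarith)
  refine ((((hasDerivAt_arcsin_half ht).const_mul y).sub (hasDerivAt_sqrt_four_sub_sq ht)).sub
    ((hasDerivAt_arcsin_moebius hy ht).const_mul _)).congr_deriv ?_
  field_simp
  linear_combination -hs2 - hq2

lemma continuousOn_stieltjesPrimitive {y : ℝ} (hy : 2 < y) :
    ContinuousOn (stieltjesPrimitive y) (Icc (-2) 2) := by
  have hden : ∀ t ∈ Icc (-2 : ℝ) 2, 2 * (y - t) ≠ 0 := fun t ht => by linarith [ht.2]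
  unfold stieltjesPrimitive
  fun_prop (disch := assumption)

lemma stieltjesPrimitive_sub {y : ℝ} (hy : 2 < y) :
    stieltjesPrimitive y 2 - stieltjesPrimitive y (-2) = π * (y - √(y ^ 2 - 4)) := by
  have h1 : (y * 2 - 4) / (2 * (y - 2)) = 1 := by
    rw [div_eq_one_iff_eq (by linarith)]; ring
  have h2 : (y * -2 - 4) / (2 * (y - -2)) = -1 := by
    rw [div_eq_iff (by linarith)]; ring
  simp only [stieltjesPrimitive, h1, h2]
  norm_num
  ring

lemma intervalIntegral_sqrt_div_sub {y : ℝ} (hy : 2 < y) :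
    ∫ t in (-2)..2, √(4 - t ^ 2) / (y - t) = π * (y - √(y ^ 2 - 4)) := by
  rw [intervalIntegral.integral_eq_sub_of_hasDerivAt_of_le (by norm_num)
    (continuousOn_stieltjesPrimitive hy) (fun t ht => hasDerivAt_stieltjesPrimitive hy ht),
    stieltjesPrimitive_sub hy]
  refine ContinuousOn.intervalIntegrable_of_Icc (by norm_num) ?_
  have hden : ∀ t ∈ Icc (-2 : ℝ) 2, y - t ≠ 0 := fun t ht => by linarith [ht.2]
  fun_prop (disch := assumption)

lemma log_add_one_sub_div_le_log {u v : ℝ} (hu : 0 < u) (hv : 0 < v) :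
    log u + (1 - u / v) ≤ log v := by
  have h := log_le_sub_one_of_pos (div_pos hu hv)
  rw [log_div hu.ne' hv.ne'] at h
  linarith

lemma sub_sqrt_sq_sub_four_div_two_le_one {y : ℝ} (hy : 2 ≤ y) : (y - √(y ^ 2 - 4)) / 2 ≤ 1 := by
  have h : y - 2 ≤ √(y ^ 2 - 4) := le_sqrt_of_sq_le (by nlinarith)
  linarith

lemma sqrt_sq_sub_four_le {a y : ℝ} (ha : 1 ≤ a) (hy₀ : 0 ≤ y) (hy : y ≤ a + 1 / a) :
    √(y ^ 2 - 4) ≤ a - 1 / a := by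
  have hinv : 1 / a ≤ 1 := (div_le_one (by positivity)).mpr ha
  have hsq : (a - 1 / a) ^ 2 = (a + 1 / a) ^ 2 - 4 := by field_simp; ring
  rw [sqrt_le_iff, hsq]
  exact ⟨by linarith, by nlinarith⟩

namespace semicircle

lemma le_restrict_Ioo : semicircle ≤ volume.restrict (Ioo (-2) 2) := by
  rw [semicircle, ← withDensity_indicator_one measurableSet_Ioo]
  refine withDensity_mono (Filter.Eventually.of_forall fun t => ?_)
  by_cases ht : t ∈ Ioo (-2 : ℝ) 2
  · have h4 : 4 - t ^ 2 ≤ 2 ^ 2 := by nlinarith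
    have hsqrt : √(4 - t ^ 2) ≤ 2 := sqrt_le_iff.mpr ⟨by norm_num, h4⟩
    rw [indicator_of_mem ht, Pi.one_apply, ENNReal.ofReal_le_one,
      div_le_one (by positivity)]
    nlinarith [pi_gt_three]
  · simp [sqrt_four_sub_sq_eq_zero_of_notMem_Ioo ht]

lemma integrable_of_integrableOn {g : ℝ → ℝ} (hg : IntegrableOn g (Ioo (-2) 2)) :
    Integrable g semicircle :=
  Integrable.mono_measure hg le_restrict_Ioo

lemma ae_mem_Ioo : ∀ᵐ t ∂semicircle, t ∈ Ioo (-2 : ℝ) 2 :=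
  Measure.AbsolutelyContinuous.ae_le (Measure.absolutelyContinuous_of_le le_restrict_Ioo)
    (ae_restrict_mem measurableSet_Ioo)

lemma integral_eq_intervalIntegral (g : ℝ → ℝ) :
    ∫ t, g t ∂semicircle = (2 * π)⁻¹ * ∫ t in (-2)..2, √(4 - t ^ 2) * g t := by
  rw [semicircle, integral_withDensity_eq_integral_toReal_smul (by fun_prop)
    (Filter.Eventually.of_forall fun _ => ENNReal.ofReal_lt_top),
    intervalIntegral.integral_of_le (by norm_num), ← integral_const_mul,
    ← setIntegral_eq_integral_of_forall_compl_eq_zero (s := Ioc (-2) 2)]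
  · refine setIntegral_congr_fun measurableSet_Ioc fun t _ => ?_
    rw [ENNReal.toReal_ofReal (by positivity), smul_eq_mul]
    ring
  · intro t ht
    rw [sqrt_four_sub_sq_eq_zero_of_notMem_Ioo fun h => ht (Ioo_subset_Ioc_self h)]
    simp

lemma integrable_log_abs_sub (y : ℝ) : Integrable (fun t => log |y - t|) semicircle := by
  refine integrable_of_integrableOn (IntegrableOn.mono_set ?_ Ioo_subset_Ioc_self)
  have h := (intervalIntegral.intervalIntegrable_log' (a := y - -2) (b := y - 2)).comp_sub_left y
  simp only [sub_sub_cancel, Real.log_abs] at h ⊢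
  exact (intervalIntegrable_iff_integrableOn_Ioc_of_le (by norm_num)).mp h

lemma integral_inv_sub {y : ℝ} (hy : 2 < y) :
    ∫ t, (y - t)⁻¹ ∂semicircle = (y - √(y ^ 2 - 4)) / 2 := by
  simp only [integral_eq_intervalIntegral, ← div_eq_mul_inv, intervalIntegral_sqrt_div_sub hy]
  field_simp

lemma integrable_inv_sub {y : ℝ} (hy : 2 < y) : Integrable (fun t => (y - t)⁻¹) semicircle := by
  refine integrable_of_integrableOn (IntegrableOn.mono_set ?_ Ioo_subset_Icc_self)
  have hden : ∀ t ∈ Icc (-2 : ℝ) 2, y - t ≠ 0 := fun t ht => by linarith [ht.2]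
  exact ContinuousOn.integrableOn_Icc (by fun_prop (disch := assumption))

-- The tangent-line bound for the concave `y ↦ log (y - t)` at `y₂`, integrated against `σ`.
lemma integral_log_abs_sub_add_le {y₁ y₂ : ℝ} (h₁ : 2 ≤ y₁) (h₂ : 2 < y₂) :
    ∫ t, log |y₁ - t| ∂semicircle + (y₂ - y₁) * ((y₂ - √(y₂ ^ 2 - 4)) / 2)
      ≤ ∫ t, log |y₂ - t| ∂semicircle := by
  rw [← integral_inv_sub h₂, ← integral_const_mul,
    ← integral_add (integrable_log_abs_sub y₁) ((integrable_inv_sub h₂).const_mul _)]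
  refine integral_mono_ae ((integrable_log_abs_sub y₁).add ((integrable_inv_sub h₂).const_mul _))
    (integrable_log_abs_sub y₂) ?_
  filter_upwards [ae_mem_Ioo] with t ht
  have hu : 0 < y₁ - t := by linarith [ht.2]
  have hv : 0 < y₂ - t := by linarith [ht.2]
  have h := log_add_one_sub_div_le_log hu hv
  rw [abs_of_pos hu, abs_of_pos hv]
  calc log (y₁ - t) + (y₂ - y₁) * (y₂ - t)⁻¹ = log (y₁ - t) + (1 - (y₁ - t) / (y₂ - t)) := by
        field_simp; ring
    _ ≤ log (y₂ - t) := h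

end semicircle

lemma Ffun_eq_of_one_lt {a y : ℝ} (ha : 1 < a) (hy : 2 ≤ y) :
    Ffun a y = a * y / 2 - 1 / 2 - log a / 2 - y ^ 2 / 4
      + (1 / 2) * ∫ t, log |y - t| ∂semicircle := by
  have hbranch : ¬ 2 * (a / 2) ≤ (y - √(y ^ 2 - 4)) / 2 := by
    linarith [sub_sqrt_sq_sub_four_div_two_le_one hy]
  rw [Ffun, Jfun, if_neg hbranch, mul_div_cancel₀ a two_ne_zero]
  ring

lemma monotoneOn_Ffun {a : ℝ} (ha : 1 ≤ a) : MonotoneOn (Ffun a) (Icc 2 (a + 1 / a)) := by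
  rcases ha.eq_or_lt with rfl | h1a
  · exact (subsingleton_Icc_of_ge (by norm_num)).monotoneOn _
  intro y₁ hy₁ y₂ hy₂ h₁₂
  rcases h₁₂.eq_or_lt with rfl | h₁₂
  · rfl
  have h₂ : 2 < y₂ := hy₁.1.trans_lt h₁₂
  have hinc := semicircle.integral_log_abs_sub_add_le hy₁.1 h₂
  have hsqrt := sqrt_sq_sub_four_le ha (by linarith) hy₂.2
  have hslope : 0 ≤ (y₂ - y₁) * (2 * a - y₁ - √(y₂ ^ 2 - 4)) :=
    mul_nonneg (by linarith) (by linarith [hy₁.2])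
  rw [Ffun_eq_of_one_lt h1a hy₁.1, Ffun_eq_of_one_lt h1a h₂.le]
  linear_combination (1 / 2) * hinc + (1 / 4) * hslope

/-- For `a ≥ 1` and `2 ≤ x ≤ a + 1/a`, the function `F_a` is non-decreasing on `[2,x]`,
so its supremum over `[2,x]` is attained at `y = x`. -/
theorem Ffun_max_at_right_end (a x : ℝ) (ha : 1 ≤ a) (hx2 : 2 ≤ x) (hx : x ≤ a + 1 / a) :
    MonotoneOn (Ffun a) (Set.Icc 2 x) ∧
    ∀ y ∈ Set.Icc (2 : ℝ) x, Ffun a y ≤ Ffun a x := by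
  have hmono := (monotoneOn_Ffun ha).mono (Icc_subset_Icc_right hx)
  exact ⟨hmono, fun y hy => hmono hy (right_mem_Icc.mpr hx2) hy.2⟩

end
end
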